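/- Let Γ be a connected G-graph with finite edge stabilizers, let u, v be distinct vertices of Γ with {u,v} ∉ E(Γ), and let Γ' be the G-graph obtained from Γ by attaching the G-orbit of edges with representative {u,v}. Let a be a vertex such that Γ is fine at a, let b be a vertex with b ≠ a, and let k ≥ 1 be an integer. Then the set {x ∈ ab→(k)_{Γ'} : x ∉ T_aΓ} is finite. -/

import Mathlib

open SimpleGraph
/-- The graph `Γ` with the vertex `v` deleted (kept as an isolated vertex). -/
def deleteVert {V : Type*} (Γ : SimpleGraph V) (v : V) : SimpleGraph V where
  Adj x y := Γ.Adj x y ∧ x ≠ v ∧ y ≠ v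
  symm := ⟨fun x y ⟨h, hx, hy⟩ => ⟨h.symm, hy, hx⟩⟩
  loopless := ⟨fun x ⟨h, _, _⟩ => Γ.loopless.irrefl x h⟩

/-- The angle metric `∠_v(x,y)`: length of a shortest path from `x` to `y` in `Γ - v`,
with value `∞` if there is no such path. -/
noncomputable def angle {V : Type*} (Γ : SimpleGraph V) (v x y : V) : ℕ∞ :=
  (deleteVert Γ v).edist x y

/-- `Γ` is fine at `v`: every ball of finite radius in `(T_vΓ, ∠_v)` is finite. -/
def FineAt {V : Type*} (Γ : SimpleGraph V) (v : V) : Prop :=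
  ∀ x ∈ Γ.neighborSet v, ∀ n : ℕ,
    {y ∈ Γ.neighborSet v | angle Γ v x y ≤ (n : ℕ∞)}.Finite

/-- The set `uv→(k)_Γ` of vertices `w` adjacent to `u` that belong to some escaping path
from `u` to `v` of length at most `k`.  An escaping path from `u` to `v` is an edge-path
`[u, u₁, …, uₙ]` with `v = uᵢ` for some `i ≥ 1` and `uᵢ ≠ u` for all `i ≥ 1`. -/
def escSet {V : Type*} (Γ : SimpleGraph V) (u v : V) (k : ℕ) : Set V :=
  {w | w ∈ Γ.neighborSet u ∧ ∃ (x : V) (p : Γ.Walk u x),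
      p.length ≤ k ∧ v ∈ p.support.tail ∧ u ∉ p.support.tail ∧ w ∈ p.support}

/-- The `G`-graph obtained from `Γ` by attaching the `G`-orbit of edges with
representative `{u,v}`. -/
def attachOrbit {V : Type*} (Γ : SimpleGraph V) (G : Type*) [Group G] [MulAction G V]
    (u v : V) (huv : u ≠ v) : SimpleGraph V where
  Adj x y := Γ.Adj x y ∨ ∃ g : G, (g • u = x ∧ g • v = y) ∨ (g • v = x ∧ g • u = y)
  symm := by
    constructor
    rintro x y (h | ⟨g, hg⟩)
    · exact Or.inl h.symm
    · refine Or.inr ⟨g, ?_⟩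
      rcases hg with ⟨h1, h2⟩ | ⟨h1, h2⟩
      · exact Or.inr ⟨h2, h1⟩
      · exact Or.inl ⟨h2, h1⟩
  loopless := by
    constructor
    rintro x (h | ⟨g, ⟨h1, h2⟩ | ⟨h1, h2⟩⟩)
    · exact Γ.loopless.irrefl x h
    · exact huv (smul_left_cancel g (h1.trans h2.symm))
    · exact huv (smul_left_cancel g (h2.trans h1.symm))

/-!
Call a neighbour `c` of `a` *`m`-close to `b`* if some walk of length at most `m` from `c` to `b`
avoids `a`. Fineness of `Γ` at `a` implies that, for fixed `b` and `m`, only finitely many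
neighbours of `a` are `m`-close to `b` in `Γ`, and every vertex of `ab→(k)` is `2k`-close to `b`;
so it suffices to prove the same finiteness in `Γ'`, by induction on `m`.

Fix a walk `q` from `u` to `v` in `Γ` (it exists as `Γ` is connected). Replacing each new
edge `g{u,v}` of a walk in `Γ'` by the translate `gq` turns it into a walk in `Γ` at most `|q|`
times longer. Let `c` be `(m+1)`-close to `b` in `Γ'`, witnessed by `W`, and expand the walk
`a c W` into `Γ`; its last edge `{a, e}` at `a` makes `e` close to `b` in `Γ`, so `e` lies in a
finite set. Either `{a, e}` is the old edge `{a, c}`, or it lies on a translate `gq`; as edge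
stabilisers are finite, there are only finitely many such `g`, and `c` is then an endpoint of
`g{u,v}` or `m`-close to one of them, which the induction handles.
-/

open SimpleGraph Walk

section Walks

variable {V : Type*} {Δ : SimpleGraph V}

def closeNeighbors (Δ : SimpleGraph V) (a b : V) (M : ℕ) : Set V :=
  {c | Δ.Adj a c ∧ ∃ W : Δ.Walk c b, a ∉ W.support ∧ W.length ≤ M}

lemma edist_deleteVert_le_length {a c b : V} (W : Δ.Walk c b) (ha : a ∉ W.support) :
    (deleteVert Δ a).edist c b ≤ W.length := by
  have hW : ∀ d ∈ W.edges, d ∈ (deleteVert Δ a).edgeSet := by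
    intro d hd
    induction d using Sym2.ind with
    | _ x y =>
      exact ⟨W.adj_of_mem_edges hd, fun h => ha (h ▸ W.fst_mem_support_of_mem_edges hd),
        fun h => ha (h ▸ W.snd_mem_support_of_mem_edges hd)⟩
  simpa using (W.transfer _ hW).edist_le

lemma closeNeighbors_finite_of_fineAt {a : V} (hfine : FineAt Δ a) (b : V) (M : ℕ) :
    (closeNeighbors Δ a b M).Finite := by
  rcases Set.eq_empty_or_nonempty (closeNeighbors Δ a b M) with h | ⟨c₀, hc₀, W₀, haW₀, hW₀⟩
  · simp [h]
  refine (hfine c₀ hc₀ (M + M)).subset fun c ⟨hc, W, haW, hW⟩ => ⟨hc, ?_⟩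
  calc angle Δ a c₀ c ≤ (deleteVert Δ a).edist c₀ b + (deleteVert Δ a).edist b c :=
        SimpleGraph.edist_triangle
    _ = (deleteVert Δ a).edist c₀ b + (deleteVert Δ a).edist c b := by rw [edist_comm (u := b)]
    _ ≤ M + M := add_le_add ((edist_deleteVert_le_length W₀ haW₀).trans (by exact_mod_cast hW₀))
        ((edist_deleteVert_le_length W haW).trans (by exact_mod_cast hW))
    _ = (M + M : ℕ) := by push_cast; rfl

lemma escSet_subset_closeNeighbors {a b : V} (k : ℕ) :
    escSet Δ a b k ⊆ closeNeighbors Δ a b (2 * k) := by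
  classical
  rintro w ⟨haw, x, p, hp, hb, ha, hw⟩
  cases p with
  | nil => simp at hb
  | cons h p =>
    rw [support_cons, List.tail_cons] at hb ha
    have hw : w ∈ p.support := (List.mem_cons.mp hw).resolve_left fun h => haw.ne h.symm
    refine ⟨haw, (p.takeUntil w hw).reverse.append (p.takeUntil b hb), fun h => ha ?_, ?_⟩
    · rw [mem_support_append_iff, support_reverse, List.mem_reverse] at h
      exact h.elim (fun h => p.support_takeUntil_subset_support hw h)
        (fun h => p.support_takeUntil_subset_support hb h)
    · have := p.length_takeUntil_le_length hw
      have := p.length_takeUntil_le_length hb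
      simp only [length_append, length_reverse, length_cons] at hp ⊢
      omega

lemma exists_edge_to_walk_avoiding {a : V} :
    ∀ {x b : V} (W : Δ.Walk x b), a ∈ W.support → b ≠ a →
      ∃ e, s(a, e) ∈ W.edges ∧ ∃ W' : Δ.Walk e b, a ∉ W'.support ∧ W'.length ≤ W.length
  | _, _, nil, ha, hb => absurd (List.mem_singleton.mp ha).symm hb
  | x, _, cons (v := y) h W, ha, hb => by
    by_cases haW : a ∈ W.support
    · obtain ⟨e, he, W', haW', hW'⟩ := exists_edge_to_walk_avoiding W haW hb
      exact ⟨e, List.mem_cons_of_mem _ he, W', haW', by simp only [length_cons]; omega⟩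
    · obtain rfl : a = x := by simpa [haW] using ha
      exact ⟨y, List.mem_cons_self, W, haW, by simp⟩

lemma exists_shorter_prefix_of_mem_edges {c y x x' : V} {W : Δ.Walk c y}
    (h : s(x, x') ∈ W.edges) :
    ∃ z ∈ ({x, x'} : Set V), ∃ P : Δ.Walk c z, P.length < W.length ∧ P.support ⊆ W.support := by
  classical
  have hx := W.fst_mem_support_of_mem_edges h
  have hx' := W.snd_mem_support_of_mem_edges h
  by_cases hxy : x = y
  · have hx'y : x' ≠ y := hxy ▸ (W.adj_of_mem_edges h).ne.symm
    exact ⟨x', by simp, W.takeUntil x' hx', length_takeUntil_lt_length hx' hx'y,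
      W.support_takeUntil_subset_support hx'⟩
  · exact ⟨x, by simp, W.takeUntil x hx, length_takeUntil_lt_length hx hxy,
      W.support_takeUntil_subset_support hx⟩

lemma exists_walk_of_map_eq {W : Type*} {Δ' : SimpleGraph W} (f : Δ →g Δ') {u v : V}
    (q : Δ.Walk u v) {x y : W} (h : s(f u, f v) = s(x, y)) :
    ∃ p : Δ'.Walk x y, p.length = q.length ∧ ∀ d ∈ p.edges, ∃ d₀ ∈ q.edges, Sym2.map f d₀ = d := by
  have hedges : ∀ d ∈ (q.map f).edges, ∃ d₀ ∈ q.edges, Sym2.map f d₀ = d := by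
    simp [edges_map]
  rcases Sym2.eq_iff.mp h with ⟨rfl, rfl⟩ | ⟨rfl, rfl⟩
  · exact ⟨q.map f, by simp, hedges⟩
  · exact ⟨(q.map f).reverse, by simp, fun d hd => hedges d (by simpa using hd)⟩

end Walks

section Action

variable {V G : Type*} [Group G] [MulAction G V] {Γ : SimpleGraph V}

lemma finite_transporter_of_mem_edgeSet
    (hedge : ∀ x y : V, Γ.Adj x y →
      ({g : G | (g • x = x ∧ g • y = y) ∨ (g • x = y ∧ g • y = x)} : Set G).Finite)
    {d₀ : Sym2 V} (hd₀ : d₀ ∈ Γ.edgeSet) (d : Sym2 V) :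
    {g : G | Sym2.map (g • ·) d₀ = d}.Finite := by
  induction d₀ using Sym2.ind with
  | _ x y =>
    simp only [Sym2.map_mk]
    rcases Set.eq_empty_or_nonempty {g : G | s(g • x, g • y) = d} with h | ⟨g₀, hg₀⟩
    · exact h ▸ Set.finite_empty
    refine ((hedge x y hd₀).image (g₀ * ·)).subset fun g hg => ⟨g₀⁻¹ * g, ?_, by group⟩
    have h : s(g • x, g • y) = s(g₀ • x, g₀ • y) := hg.trans hg₀.symm
    show (_ ∧ _) ∨ (_ ∧ _)
    simpa only [mul_smul, inv_smul_eq_iff] using Sym2.eq_iff.mp h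

def edgeTransporters {u v : V} (q : Γ.Walk u v) (a : V) (R : Set V) : Set G :=
  {g | ∃ d ∈ q.edges, ∃ e ∈ R, Sym2.map (g • ·) d = s(a, e)}

lemma edgeTransporters_finite
    (hedge : ∀ x y : V, Γ.Adj x y →
      ({g : G | (g • x = x ∧ g • y = y) ∨ (g • x = y ∧ g • y = x)} : Set G).Finite)
    {u v : V} (q : Γ.Walk u v) (a : V) {R : Set V} (hR : R.Finite) :
    (edgeTransporters (G := G) q a R).Finite := by
  refine (q.edges.finite_toSet.biUnion fun d hd => hR.biUnion fun e _ =>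
    finite_transporter_of_mem_edgeSet hedge (q.edges_subset_edgeSet hd) s(a, e)).subset ?_
  rintro g ⟨d, hd, e, he, h⟩
  exact Set.mem_biUnion hd (Set.mem_biUnion he h)

lemma exists_lift_attachOrbit
    (hact : ∀ (g : G) (x y : V), Γ.Adj x y → Γ.Adj (g • x) (g • y))
    {u v : V} (huv : u ≠ v) (q : Γ.Walk u v) {x y : V}
    (W : (attachOrbit Γ G u v huv).Walk x y) :
    ∃ Wt : Γ.Walk x y, Wt.length ≤ W.length * q.length ∧ ∀ d ∈ Wt.edges, d ∈ W.edges ∨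
      ∃ g : G, s(g • u, g • v) ∈ W.edges ∧ ∃ d₀ ∈ q.edges, Sym2.map (g • ·) d₀ = d := by
  induction W with
  | nil => exact ⟨nil, by simp, by simp⟩
  | @cons x₀ x₁ y h W ih =>
    obtain ⟨Wt, hlen, hedges⟩ := ih
    have hedges' : ∀ d ∈ Wt.edges, d ∈ (cons h W).edges ∨
        ∃ g : G, s(g • u, g • v) ∈ (cons h W).edges ∧ ∃ d₀ ∈ q.edges, Sym2.map (g • ·) d₀ = d :=
      fun d hd => (hedges d hd).imp (List.mem_cons_of_mem _)
        fun ⟨g, hg, hd⟩ => ⟨g, List.mem_cons_of_mem _ hg, hd⟩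
    have hq : 1 ≤ q.length := not_nil_iff_lt_length.mp (not_nil_of_ne huv)
    simp only [length_cons]
    rcases h with hΓ | ⟨g, hg⟩
    · refine ⟨cons hΓ Wt, by simp only [length_cons]; nlinarith, ?_⟩
      rintro d (hd | ⟨_, hd⟩)
      · exact Or.inl List.mem_cons_self
      · exact hedges' d hd
    · have hs : s(g • u, g • v) = s(x₀, x₁) := Sym2.eq_iff.mpr (hg.imp id And.symm)
      obtain ⟨p, hp, hpq⟩ := exists_walk_of_map_eq (⟨(g • ·), hact g _ _⟩ : Γ →g Γ) q hs
      refine ⟨p.append Wt, by simp only [length_append]; nlinarith, ?_⟩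
      intro d hd
      rcases List.mem_append.mp (edges_append p Wt ▸ hd) with hd | hd
      · exact Or.inr ⟨g, hs ▸ List.mem_cons_self, hpq d hd⟩
      · exact hedges' d hd

lemma closeNeighbors_attachOrbit_succ_subset
    (hact : ∀ (g : G) (x y : V), Γ.Adj x y → Γ.Adj (g • x) (g • y))
    {u v : V} (huv : u ≠ v) (q : Γ.Walk u v) (a b : V) (m : ℕ) :
    closeNeighbors (attachOrbit Γ G u v huv) a b (m + 1) ⊆
      closeNeighbors Γ a b ((m + 2) * q.length) ∪
        ⋃ g ∈ edgeTransporters (G := G) q a (closeNeighbors Γ a b ((m + 2) * q.length)),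
          ⋃ z ∈ ({g • u, g • v} : Set V),
            insert z (closeNeighbors (attachOrbit Γ G u v huv) a z m) := by
  rintro c ⟨hac, W, haW, hW⟩
  have hba : b ≠ a := fun h => haW (h ▸ W.end_mem_support)
  obtain ⟨Wt, hWt, hedges⟩ := exists_lift_attachOrbit hact huv q (cons hac W)
  obtain ⟨e, hae, W', haW', hW'⟩ := exists_edge_to_walk_avoiding Wt Wt.start_mem_support hba
  have he : e ∈ closeNeighbors Γ a b ((m + 2) * q.length) :=
    ⟨Wt.adj_of_mem_edges hae, W', haW', by simp only [length_cons] at hWt; nlinarith⟩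
  rcases hedges _ hae with hae | ⟨g, hg, d, hd, hgd⟩
  · rcases List.mem_cons.mp hae with h | h
    · obtain rfl : e = c := (by simpa using h : e = c ∨ a = c ∧ e = a).resolve_right
        fun h => hac.ne h.1
      exact Or.inl he
    · exact absurd (W.fst_mem_support_of_mem_edges h) haW
  refine Or.inr (Set.mem_biUnion (x := g) ⟨d, hd, e, he, hgd⟩ ?_)
  rcases List.mem_cons.mp hg with h | h
  · rcases Sym2.eq_iff.mp h with ⟨-, rfl⟩ | ⟨rfl, -⟩
    · exact Set.mem_biUnion (by simp) (Set.mem_insert _ _)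
    · exact Set.mem_biUnion (by simp) (Set.mem_insert _ _)
  obtain ⟨z, hz, P, hP, hPW⟩ := exists_shorter_prefix_of_mem_edges h
  exact Set.mem_biUnion hz (Or.inr ⟨hac, P, fun h => haW (hPW h), by omega⟩)

lemma closeNeighbors_attachOrbit_finite
    (hact : ∀ (g : G) (x y : V), Γ.Adj x y → Γ.Adj (g • x) (g • y))
    (hedge : ∀ x y : V, Γ.Adj x y →
      ({g : G | (g • x = x ∧ g • y = y) ∨ (g • x = y ∧ g • y = x)} : Set G).Finite)
    {u v : V} (huv : u ≠ v) (hreach : Γ.Reachable u v) {a : V} (hfine : FineAt Γ a) (m : ℕ)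
    (b : V) : (closeNeighbors (attachOrbit Γ G u v huv) a b m).Finite := by
  obtain ⟨q⟩ := hreach
  induction m generalizing b with
  | zero =>
    refine (Set.finite_singleton b).subset ?_
    rintro c ⟨-, W, -, hW⟩
    exact eq_of_length_eq_zero (Nat.le_zero.mp hW)
  | succ m ih =>
    have hR := closeNeighbors_finite_of_fineAt hfine b ((m + 2) * q.length)
    refine (hR.union ((edgeTransporters_finite hedge q a hR).biUnion fun g _ => ?_)).subset
      (closeNeighbors_attachOrbit_succ_subset hact huv q a b m)
    exact (Set.toFinite {g • u, g • v}).biUnion fun z _ => (ih z).insert z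

end Action

theorem statement6_general {V G : Type*} [Group G] [MulAction G V] (Γ : SimpleGraph V)
    (hconn : Γ.Connected)
    (hact : ∀ (g : G) (x y : V), Γ.Adj x y → Γ.Adj (g • x) (g • y))
    (hedge : ∀ x y : V, Γ.Adj x y →
      ({g : G | (g • x = x ∧ g • y = y) ∨ (g • x = y ∧ g • y = x)} : Set G).Finite)
    (u v : V) (huv : u ≠ v)
    (a : V) (hfine : FineAt Γ a) (b : V) (k : ℕ) :
    ({x : V | x ∈ escSet (attachOrbit Γ G u v huv) a b k ∧ x ∉ Γ.neighborSet a}).Finite :=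
  (closeNeighbors_attachOrbit_finite hact hedge huv (hconn.preconnected u v) hfine (2 * k)
    b).subset fun _ hx => escSet_subset_closeNeighbors k hx.1

theorem statement6 {V G : Type*} [Group G] [MulAction G V] (Γ : SimpleGraph V)
    (hconn : Γ.Connected)
    (hact : ∀ (g : G) (x y : V), Γ.Adj x y → Γ.Adj (g • x) (g • y))
    (hedge : ∀ x y : V, Γ.Adj x y →
      ({g : G | (g • x = x ∧ g • y = y) ∨ (g • x = y ∧ g • y = x)} : Set G).Finite)
    (u v : V) (huv : u ≠ v) (henew : ¬ Γ.Adj u v)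
    (a : V) (hfine : FineAt Γ a) (b : V) (hba : b ≠ a) (k : ℕ) (hk : 1 ≤ k) :
    ({x : V | x ∈ escSet (attachOrbit Γ G u v huv) a b k ∧ x ∉ Γ.neighborSet a}).Finite :=
  statement6_general Γ hconn hact hedge u v huv a hfine b k
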